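/- arXiv:2603.05916 — 2 statements merged into one kernel-verified Lean document; each statement's English description precedes it below -/
import Mathlib

section
/- Let m ≥ 1, let ψ₀, ψ₁, …, ψ_m : ℕ → ℝ be real sequences, and let γ₁, …, γ_m ∈ (0,1] be constants such that for each i ∈ {1,…,m} and all t ∈ ℕ, ψᵢ(t) = ψᵢ₋₁(t+1) − ψᵢ₋₁(t) + γᵢ·ψᵢ₋₁(t). If ψᵢ(0) ≥ 0 for all i ∈ {0,…,m−1} and ψ_m(t) ≥ 0 for all t ∈ ℕ, then ψᵢ(t) ≥ 0 for all i ∈ {0,…,m−1} and all t ∈ ℕ (forward invariance of the intersection of the DHOCBF superlevel sets along the trajectory). -/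
/-- Forward invariance of the intersection of DHOCBF superlevel
sets along a trajectory, with linear class-κ functions `αᵢ(s) = γᵢ·s`. -/
theorem dhocbf_forward_invariance_linear
    (m : ℕ) (hm : 1 ≤ m)
    (ψ : ℕ → ℕ → ℝ) (γ : ℕ → ℝ)
    (hγ : ∀ i, 1 ≤ i → i ≤ m → 0 < γ i ∧ γ i ≤ 1)
    (hrec : ∀ i, 1 ≤ i → i ≤ m → ∀ t : ℕ,
      ψ i t = ψ (i - 1) (t + 1) - ψ (i - 1) t + γ i * ψ (i - 1) t)
    (hinit : ∀ i, i ≤ m - 1 → 0 ≤ ψ i 0)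
    (htop : ∀ t : ℕ, 0 ≤ ψ m t) :
    ∀ i, i ≤ m - 1 → ∀ t : ℕ, 0 ≤ ψ i t := by
  have key : ∀ k, k ≤ m → ∀ t, 0 ≤ ψ (m - k) t := by
    intro k
    induction k with
    | zero => intro _ t; simpa using htop t
    | succ k ih =>
      intro hk t
      have hk' : k ≤ m := le_of_lt (Nat.lt_of_succ_le hk)
      set i := m - (k + 1) with hi
      have hi1 : i + 1 = m - k := by omega
      have h1le : 1 ≤ i + 1 := by omega
      have hle : i + 1 ≤ m := by omega
      have hrec' : ∀ t, ψ i (t + 1) = ψ (i + 1) t + (1 - γ (i + 1)) * ψ i t := by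
        intro t
        have := hrec (i + 1) h1le hle t
        simp only [Nat.add_sub_cancel] at this
        linarith
      have hγ' := hγ (i + 1) h1le hle
      induction t with
      | zero => exact hinit i (by omega)
      | succ t iht =>
        have h1 : 0 ≤ ψ (i + 1) t := by rw [hi1]; exact ih hk' t
        have h2 : 0 ≤ (1 - γ (i + 1)) * ψ i t :=
          mul_nonneg (by linarith [hγ'.2]) iht
        rw [hrec' t]; linarith
  intro i hi t
  have : i = m - (m - i) := by omega
  rw [this]; exact key (m - i) (by omega) t
end

section
/- Let m ≥ 1, let ψ₀, ψ₁, …, ψ_m : ℕ → ℝ be real sequences, and let α₁, …, α_m : ℝ → ℝ be functions satisfying αᵢ(s) ≤ s for all s ≥ 0, such that for each i ∈ {1,…,m} and all t ∈ ℕ, ψᵢ(t) = ψᵢ₋₁(t+1) − ψᵢ₋₁(t) + αᵢ(ψᵢ₋₁(t)). If ψᵢ(0) ≥ 0 for all i ∈ {0,…,m−1} and ψ_m(t) ≥ 0 for all t ∈ ℕ, then ψᵢ(t) ≥ 0 for all i ∈ {0,…,m−1} and all t ∈ ℕ. -/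
/-- Forward invariance of the intersection of DHOCBF superlevel
sets along a trajectory, with class-κ-like functions `αᵢ` satisfying `αᵢ(s) ≤ s`
for `s ≥ 0`. -/
theorem dhocbf_forward_invariance
    (m : ℕ) (hm : 1 ≤ m)
    (ψ : ℕ → ℕ → ℝ) (α : ℕ → ℝ → ℝ)
    (hα : ∀ i, 1 ≤ i → i ≤ m → ∀ s : ℝ, 0 ≤ s → α i s ≤ s)
    (hrec : ∀ i, 1 ≤ i → i ≤ m → ∀ t : ℕ,
      ψ i t = ψ (i - 1) (t + 1) - ψ (i - 1) t + α i (ψ (i - 1) t))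
    (hinit : ∀ i, i ≤ m - 1 → 0 ≤ ψ i 0)
    (htop : ∀ t : ℕ, 0 ≤ ψ m t) :
    ∀ i, i ≤ m - 1 → ∀ t : ℕ, 0 ≤ ψ i t := by
  have aux : ∀ j, j ≤ m → ∀ t, 0 ≤ ψ (m - j) t := by
    intro j
    induction j with
    | zero => intro _ t; simpa using htop t
    | succ j ih =>
      intro hj t
      have hjm : j ≤ m := Nat.le_of_succ_le hj
      have ihj := ih hjm
      set i := m - (j + 1) with hi
      have hi1 : i + 1 = m - j := by omega
      have hile : i ≤ m - 1 := by omega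
      have h1 : 1 ≤ i + 1 := Nat.le_add_left 1 i
      have h2 : i + 1 ≤ m := by omega
      induction t with
      | zero => exact hinit i hile
      | succ t iht =>
        have hr := hrec (i + 1) h1 h2 t
        simp only [Nat.add_sub_cancel] at hr
        have hα' := hα (i + 1) h1 h2 (ψ i t) iht
        have htop' : 0 ≤ ψ (i + 1) t := by rw [hi1]; exact ihj t
        have : ψ i (t + 1) = ψ (i + 1) t + ψ i t - α (i + 1) (ψ i t) := by
          linarith
        linarith
  intro i hi t
  have him : i ≤ m := by omega
  have := aux (m - i) (Nat.sub_le m i) t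
  rwa [Nat.sub_sub_self him] at this
end
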